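/- arXiv:1904.01263 — 2 statements merged into one kernel-verified Lean document; each statement's English description precedes it below -/
import Mathlib

section
/- For the Erdős–Rényi random graph, n = Σ_{k=0}^{n} C(n,k) q^{k(n-k)} k p_k for all n ≥ 0, where p_k is the probability that G(k,p) is connected and q = 1-p. -/
open Classical Finset

noncomputable section

/-- Probability that `G(n,p)` equals a given graph `g`. -/
def graphProb {n : ℕ} (p : ℝ) (g : SimpleGraph (Fin n)) : ℝ :=
  p ^ g.edgeSet.ncard * (1 - p) ^ (n.choose 2 - g.edgeSet.ncard)

/-- Probability that `G(n,p)` satisfies the predicate `P`. -/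
def probEvent (n : ℕ) (p : ℝ) (P : SimpleGraph (Fin n) → Prop) : ℝ :=
  ∑ g : SimpleGraph (Fin n), if P g then graphProb p g else 0

/-- Number of connected components. -/
def numComp {n : ℕ} (g : SimpleGraph (Fin n)) : ℕ := Nat.card g.ConnectedComponent

/-- Probability that `G(n,p)` is connected. -/
def connProb (n : ℕ) (p : ℝ) : ℝ := probEvent n p (fun g => g.Connected)

/-- `E[(ν_n - 1)^{\underline s}]`. -/
def Efall (n : ℕ) (p : ℝ) (s : ℕ) : ℝ :=
  ∑ g : SimpleGraph (Fin n), ((numComp g - 1).descFactorial s : ℝ) * graphProb p g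

/-- `E[(ν_n)^{\underline s}]`. -/
def EfallNu (n : ℕ) (p : ℝ) (s : ℕ) : ℝ :=
  ∑ g : SimpleGraph (Fin n), ((numComp g).descFactorial s : ℝ) * graphProb p g

/-- Probability that `G(n,p)` has an isolated vertex. -/
def isolProb (n : ℕ) (p : ℝ) : ℝ :=
  probEvent n p (fun g => ∃ v, ∀ w, ¬ g.Adj v w)

/-! Every vertex lies in exactly one connected component, so the sizes of the components of
any graph add up to `n`; taking expectations, `n = ∑_S |S| · P(S is a component of G(n,p))`.
The set `S` is a component exactly when `G[S]` is connected and no edge leaves `S`. The edges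
inside `S`, inside its complement and between the two are independent, so this event has
probability `p_{|S|} · q^{|S|(n-|S|)}`; grouping the sets `S` by size gives the formula. -/

lemma Nat.add_choose_two (a b : ℕ) : (a + b).choose 2 = a.choose 2 + b.choose 2 + a * b := by
  rw [Nat.add_choose_eq, Finset.Nat.sum_antidiagonal_succ, Finset.Nat.sum_antidiagonal_succ,
    Finset.Nat.antidiagonal_zero, Finset.sum_singleton]
  simp only [zero_add, Nat.choose_zero_right, Nat.choose_one_right]
  ring

namespace SimpleGraph

section Components

variable {V : Type*}

lemma Reachable.mem_of_adj_closed {G : SimpleGraph V} {s : Set V}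
    (hs : ∀ x ∈ s, ∀ y, G.Adj x y → y ∈ s) {x y : V} (h : G.Reachable x y) (hx : x ∈ s) :
    y ∈ s := by
  obtain ⟨w⟩ := h
  induction w with
  | nil => exact hx
  | cons hadj _ ih => exact ih (hs _ hx _ hadj)

def IsComponentSupp (G : SimpleGraph V) (S : Finset V) : Prop :=
  ∃ C : G.ConnectedComponent, C.supp = S

lemma isComponentSupp_iff {G : SimpleGraph V} {S : Finset V} :
    G.IsComponentSupp S ↔
      (G.comap ((↑) : S → V)).Connected ∧ ∀ x ∈ S, ∀ y, G.Adj x y → y ∈ S := by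
  constructor
  · rintro ⟨C, hC⟩
    have hmem : ∀ x, x ∈ C.supp ↔ x ∈ S := fun x => by rw [hC, Finset.mem_coe]
    have e : G.induce C.supp ≃g G.comap ((↑) : S → V) :=
      ⟨Equiv.subtypeEquivRight hmem, Iff.rfl⟩
    refine ⟨e.connected_iff.1 C.connected_toSimpleGraph, fun x hx y hxy => ?_⟩
    exact (hmem y).1 (C.mem_supp_of_adj_mem_supp ((hmem x).2 hx) hxy)
  · rintro ⟨hconn, hclosed⟩
    obtain ⟨v⟩ := hconn.nonempty
    refine ⟨G.connectedComponentMk v, Set.ext fun u => ?_⟩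
    rw [ConnectedComponent.mem_supp_iff, ConnectedComponent.eq, Finset.mem_coe]
    refine ⟨fun h => h.symm.mem_of_adj_closed hclosed v.2, fun hu => ?_⟩
    exact (hconn.preconnected ⟨u, hu⟩ v).map (Hom.comap _ G)

lemma sum_card_isComponentSupp [Fintype V] [DecidableEq V] (G : SimpleGraph V) :
    ∑ S : Finset V, (if G.IsComponentSupp S then #S else 0) = Fintype.card V := by
  have hunique : ∀ v S,
      G.IsComponentSupp S ∧ v ∈ S ↔ S = (G.connectedComponentMk v).supp.toFinset := by
    refine fun v S => ⟨fun ⟨⟨C, hC⟩, hv⟩ => ?_, ?_⟩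
    · obtain rfl : G.connectedComponentMk v = C := (C.mem_supp_iff v).1 (by rwa [hC])
      rw [← Finset.coe_inj, Set.coe_toFinset, hC]
    · rintro rfl
      exact ⟨⟨_, (Set.coe_toFinset _).symm⟩, by simp⟩
  calc ∑ S : Finset V, (if G.IsComponentSupp S then #S else 0)
      = ∑ S : Finset V, ∑ v, if G.IsComponentSupp S ∧ v ∈ S then 1 else 0 := by
        refine sum_congr rfl fun S _ => ?_
        split_ifs with h <;> simp [h]
    _ = ∑ v : V, 1 := by
        rw [sum_comm]
        simp only [hunique, sum_ite_eq', mem_univ, if_true]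
    _ = Fintype.card V := by simp

variable (S : Finset V)

def glue (g₁ : SimpleGraph S) (g₂ : SimpleGraph {x // x ∉ S}) : SimpleGraph V :=
  (Equiv.sumCompl (· ∈ S)).simpleGraph (g₁ ⊕g g₂)

variable {S}

@[simp] lemma comap_glue_left (g₁ : SimpleGraph S) (g₂ : SimpleGraph {x // x ∉ S}) :
    (glue S g₁ g₂).comap (↑) = g₁ := by
  ext a b
  simp [glue]

@[simp] lemma comap_glue_right (g₁ : SimpleGraph S) (g₂ : SimpleGraph {x // x ∉ S}) :
    (glue S g₁ g₂).comap (↑) = g₂ := by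
  ext a b
  simp [glue]

lemma glue_adj_closed (g₁ : SimpleGraph S) (g₂ : SimpleGraph {x // x ∉ S}) :
    ∀ x ∈ S, ∀ y, (glue S g₁ g₂).Adj x y → y ∈ S := by
  intro x hx y hxy
  by_contra hy
  simp [glue, Equiv.sumCompl_symm_apply_of_pos hx, Equiv.sumCompl_symm_apply_of_neg hy] at hxy

lemma glue_comap_comap {G : SimpleGraph V} (hS : ∀ x ∈ S, ∀ y, G.Adj x y → y ∈ S) :
    glue S (G.comap (↑)) (G.comap (↑)) = G := by
  ext x y
  by_cases hx : x ∈ S <;> by_cases hy : y ∈ S <;>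
    simp only [glue, Equiv.simpleGraph_apply, comap_adj, hx, hy, not_false_eq_true,
      Equiv.sumCompl_symm_apply_of_pos, Equiv.sumCompl_symm_apply_of_neg,
      sum_adj_inl, sum_adj_inr, not_adj_sum_inl_inr]
  · exact iff_of_false not_false fun h => hy (hS x hx y h)
  · exact iff_of_false (by simp) fun h => hx (hS y hy x h.symm)

end Components

section Gnp

variable {V W : Type*} [Fintype V] [Fintype W]

/-- `graphProb` over an arbitrary finite vertex type, so that it applies to the graphs induced on
a set of vertices and on its complement. -/
def gnpWeight (p : ℝ) (G : SimpleGraph V) : ℝ :=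
  p ^ G.edgeSet.ncard * (1 - p) ^ ((Fintype.card V).choose 2 - G.edgeSet.ncard)

def gnpProb [DecidableEq V] (p : ℝ) (P : SimpleGraph V → Prop) [DecidablePred P] : ℝ :=
  ∑ G : SimpleGraph V, if P G then gnpWeight p G else 0

lemma ncard_edgeSet_le_choose_two (G : SimpleGraph V) :
    G.edgeSet.ncard ≤ (Fintype.card V).choose 2 := by
  rw [← coe_edgeFinset, Set.ncard_coe_finset]
  exact card_edgeFinset_le_card_choose_two

lemma Iso.gnpWeight_eq {G : SimpleGraph V} {H : SimpleGraph W} (e : G ≃g H) (p : ℝ) :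
    gnpWeight p G = gnpWeight p H := by
  have hE : G.edgeSet.ncard = H.edgeSet.ncard := by
    simpa only [Nat.card_coe_set_eq] using Nat.card_congr e.mapEdgeSet
  rw [gnpWeight, gnpWeight, hE, Fintype.card_congr e.toEquiv]

lemma gnpWeight_sum (p : ℝ) (G : SimpleGraph V) (H : SimpleGraph W) :
    gnpWeight p (G ⊕g H) =
      gnpWeight p G * gnpWeight p H * (1 - p) ^ (Fintype.card V * Fintype.card W) := by
  have hE : (G ⊕g H).edgeSet.ncard = G.edgeSet.ncard + H.edgeSet.ncard := by
    simpa only [Nat.card_coe_set_eq, Nat.card_sum] using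
      Nat.card_congr (edgeSetSumEquiv (G := G) (H := H))
  have hG := G.ncard_edgeSet_le_choose_two
  have hH := H.ncard_edgeSet_le_choose_two
  have hexp : (Fintype.card (V ⊕ W)).choose 2 - (G ⊕g H).edgeSet.ncard
      = ((Fintype.card V).choose 2 - G.edgeSet.ncard)
        + ((Fintype.card W).choose 2 - H.edgeSet.ncard) + Fintype.card V * Fintype.card W := by
    rw [hE, Fintype.card_sum, Nat.add_choose_two]
    omega
  rw [gnpWeight, gnpWeight, gnpWeight, hexp, hE]
  ring

lemma gnpWeight_glue [DecidableEq V] (p : ℝ) {S : Finset V} (g₁ : SimpleGraph S)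
    (g₂ : SimpleGraph {x // x ∉ S}) :
    gnpWeight p (glue S g₁ g₂) =
      gnpWeight p g₁ * gnpWeight p g₂ * (1 - p) ^ (#S * (Fintype.card V - #S)) := by
  rw [glue, Equiv.simpleGraph_apply, (Iso.comap _ _).gnpWeight_eq, gnpWeight_sum,
    Fintype.card_coe, Fintype.card_subtype_compl, Fintype.card_coe]

lemma sum_gnpWeight [DecidableEq V] (p : ℝ) : ∑ G : SimpleGraph V, gnpWeight p G = 1 := by
  calc ∑ G : SimpleGraph V, gnpWeight p G
      = ∑ t ∈ (⊤ : SimpleGraph V).edgeFinset.powerset,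
          p ^ #t * (1 - p) ^ (#(⊤ : SimpleGraph V).edgeFinset - #t) := by
        refine sum_nbij' (fun G => G.edgeFinset) (fun t => fromEdgeSet t) ?_ ?_ ?_ ?_ ?_
        · exact fun G _ => mem_powerset.2 (edgeFinset_mono le_top)
        · simp
        · simp
        · intro t ht
          rw [mem_powerset, ← coe_subset, coe_edgeFinset, edgeSet_top] at ht
          rw [← coe_inj, coe_edgeFinset, edgeSet_fromEdgeSet,
            sdiff_eq_left.2 (Set.subset_compl_iff_disjoint_right.1 ht)]
        · intro G _
          rw [gnpWeight, card_edgeFinset_top_eq_card_choose_two, ← coe_edgeFinset,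
            Set.ncard_coe_finset]
    _ = 1 := by rw [sum_pow_mul_eq_add_pow, add_sub_cancel, one_pow]

lemma gnpProb_connected [DecidableEq V] (p : ℝ) :
    gnpProb p (fun G : SimpleGraph V => G.Connected) = connProb (Fintype.card V) p := by
  refine Fintype.sum_equiv (Fintype.equivFin V).simpleGraph _ _ fun G => ?_
  have e : G ≃g (Fintype.equivFin V).simpleGraph G := (Iso.comap _ G).symm
  have hw : graphProb p ((Fintype.equivFin V).simpleGraph G) = gnpWeight p G := by
    rw [e.gnpWeight_eq, gnpWeight, Fintype.card_fin]
    rfl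
  simp only [hw, e.connected_iff]

lemma gnpProb_isComponentSupp [DecidableEq V] (p : ℝ) (S : Finset V) :
    gnpProb p (·.IsComponentSupp S) = connProb #S p * (1 - p) ^ (#S * (Fintype.card V - #S)) := by
  calc gnpProb p (·.IsComponentSupp S)
      = ∑ g ∈ univ.filter fun g : SimpleGraph S × SimpleGraph {x // x ∉ S} => g.1.Connected,
          gnpWeight p (glue S g.1 g.2) := by
        rw [gnpProb, ← sum_filter]
        symm
        refine sum_nbij' (fun g => glue S g.1 g.2) (fun G => (G.comap (↑), G.comap (↑)))
          ?_ ?_ ?_ ?_ fun _ _ => rfl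
        · rintro ⟨g₁, g₂⟩ hg
          simp only [mem_filter, mem_univ, true_and] at hg ⊢
          exact isComponentSupp_iff.2 ⟨by rwa [comap_glue_left], glue_adj_closed g₁ g₂⟩
        · intro G hG
          simp only [mem_filter, mem_univ, true_and] at hG ⊢
          exact (isComponentSupp_iff.1 hG).1
        · rintro ⟨g₁, g₂⟩ _
          simp
        · intro G hG
          simp only [mem_filter, mem_univ, true_and] at hG
          exact glue_comap_comap (isComponentSupp_iff.1 hG).2
    _ = gnpProb p (fun g : SimpleGraph S => g.Connected)
          * (∑ g₂ : SimpleGraph {x // x ∉ S}, gnpWeight p g₂)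
          * (1 - p) ^ (#S * (Fintype.card V - #S)) := by
        rw [gnpProb, sum_filter, Fintype.sum_prod_type, sum_mul_sum, sum_mul]
        refine sum_congr rfl fun g₁ _ => ?_
        rw [sum_mul]
        refine sum_congr rfl fun g₂ _ => ?_
        split_ifs
        · exact gnpWeight_glue p g₁ g₂
        · simp
    _ = connProb #S p * (1 - p) ^ (#S * (Fintype.card V - #S)) := by
        rw [gnpProb_connected, sum_gnpWeight, Fintype.card_coe, mul_one]

lemma sum_card_mul_gnpProb_isComponentSupp [DecidableEq V] (p : ℝ) :
    ∑ S : Finset V, (#S : ℝ) * gnpProb p (·.IsComponentSupp S) = Fintype.card V := by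
  simp only [gnpProb, mul_sum]
  rw [sum_comm]
  calc ∑ G : SimpleGraph V, ∑ S : Finset V,
        (#S : ℝ) * (if G.IsComponentSupp S then gnpWeight p G else 0)
      = ∑ G : SimpleGraph V, gnpWeight p G * Fintype.card V := by
        refine sum_congr rfl fun G _ => ?_
        rw [← G.sum_card_isComponentSupp, Nat.cast_sum, mul_sum]
        refine sum_congr rfl fun S _ => ?_
        split_ifs <;> simp [mul_comm]
    _ = Fintype.card V := by rw [← sum_mul, sum_gnpWeight, one_mul]

end Gnp

end SimpleGraph

theorem sum_choose_connProb_general (p : ℝ) (n : ℕ) :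
    (n : ℝ) = ∑ k ∈ Finset.range (n + 1),
      n.choose k * (1 - p) ^ (k * (n - k)) * k * connProb k p := by
  have h := SimpleGraph.sum_card_mul_gnpProb_isComponentSupp (V := Fin n) p
  simp only [SimpleGraph.gnpProb_isComponentSupp, Fintype.card_fin] at h
  rw [← h, ← powerset_univ, sum_powerset_apply_card
    (fun k => (k : ℝ) * (connProb k p * (1 - p) ^ (k * (n - k)))), card_univ, Fintype.card_fin]
  refine sum_congr rfl fun k _ => ?_
  rw [nsmul_eq_mul]
  ring

theorem sum_choose_connProb (p : ℝ) (hp0 : 0 ≤ p) (hp1 : p ≤ 1) (n : ℕ) :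
    (n : ℝ) = ∑ k ∈ Finset.range (n + 1),
      n.choose k * (1 - p) ^ (k * (n - k)) * k * connProb k p :=
  sum_choose_connProb_general p n
end
end

section
/- For all n ≥ 1 and s ≥ 0, the factorial moments of the component count of G(n,p) satisfy q^{n-1}·E[(ν_{n-1})^{\underline{s}}] ≤ E[(ν_n - 1)^{\underline{s}}] ≤ E[(ν_{n-1})^{\underline{s}}], where q = 1-p. -/
open Classical Finset

noncomputable section

/-!
Split `G(m + 1, p)` into `G(m, p)` on the first `m` vertices and the independent random
neighbourhood `S` of the last vertex. Adding the last vertex raises the number of components by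
at most one, so `ν_{m+1} - 1 ≤ ν_m` pointwise, and summing out `S` gives the upper bound. With
probability `q^m` the set `S` is empty; then the last vertex is a component of its own,
`ν_{m+1} - 1 = ν_m`, and keeping only this term gives the lower bound.
-/

namespace SimpleGraph

lemma Reachable.apply_eq_of_forall_adj {V β : Type*} {G : SimpleGraph V} {f : V → β}
    (hf : ∀ a b, G.Adj a b → f a = f b) {a b : V} (hab : G.Reachable a b) : f a = f b := by
  rw [reachable_iff_reflTransGen] at hab
  induction hab with
  | refl => rfl
  | tail _ hbc ih => exact ih.trans (hf _ _ hbc)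

lemma ncard_edgeSet_le_card_choose_two {V : Type*} [Fintype V]
    (G : SimpleGraph V) : G.edgeSet.ncard ≤ (Fintype.card V).choose 2 := by
  rw [← coe_edgeFinset, Set.ncard_coe_finset]
  exact G.card_edgeFinset_le_card_choose_two

variable {m : ℕ}

/-- `h` on the first `m` vertices, with the last vertex adjacent exactly to `S`. -/
def extendLast (h : SimpleGraph (Fin m)) (S : Finset (Fin m)) : SimpleGraph (Fin (m + 1)) where
  Adj := Fin.lastCases (Fin.lastCases False (· ∈ S)) fun u => Fin.lastCases (u ∈ S) (h.Adj u)
  symm := ⟨fun a b => by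
    induction a using Fin.lastCases <;> induction b using Fin.lastCases <;> simp [adj_comm]⟩
  loopless := ⟨fun a => by induction a using Fin.lastCases <;> simp⟩

section extendLast

variable (h : SimpleGraph (Fin m)) (S : Finset (Fin m)) (u v : Fin m)

@[simp] lemma extendLast_adj_castSucc_castSucc :
    (h.extendLast S).Adj u.castSucc v.castSucc ↔ h.Adj u v := by simp [extendLast]

@[simp] lemma extendLast_adj_last_castSucc :
    (h.extendLast S).Adj (Fin.last m) u.castSucc ↔ u ∈ S := by simp [extendLast]

@[simp] lemma extendLast_adj_castSucc_last :
    (h.extendLast S).Adj u.castSucc (Fin.last m) ↔ u ∈ S := by simp [extendLast]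

@[simp] lemma extendLast_adj_last_last : ¬(h.extendLast S).Adj (Fin.last m) (Fin.last m) :=
  (h.extendLast S).irrefl

end extendLast

def splitLast (m : ℕ) : SimpleGraph (Fin (m + 1)) ≃ SimpleGraph (Fin m) × Finset (Fin m) where
  toFun g := (g.comap Fin.castSucc, ({u | g.Adj (Fin.last m) u.castSucc} : Finset (Fin m)))
  invFun hS := hS.1.extendLast hS.2
  left_inv g := by
    ext a b
    induction a using Fin.lastCases <;> induction b using Fin.lastCases <;> simp [adj_comm]
  right_inv hS := by ext <;> simp

lemma edgeSet_extendLast (h : SimpleGraph (Fin m)) (S : Finset (Fin m)) :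
    (h.extendLast S).edgeSet =
      Sym2.map Fin.castSucc '' h.edgeSet ∪ (fun u : Fin m => s(Fin.last m, u.castSucc)) '' S := by
  ext e
  induction e with
  | _ a b =>
    induction a using Fin.lastCases <;> induction b using Fin.lastCases <;>
      simp [Sym2.exists, adj_comm, and_or_left, exists_or, eq_comm (a := Fin.last m)]

lemma ncard_edgeSet_extendLast (h : SimpleGraph (Fin m)) (S : Finset (Fin m)) :
    (h.extendLast S).edgeSet.ncard = h.edgeSet.ncard + #S := by
  have hdisj : Disjoint (Sym2.map Fin.castSucc '' h.edgeSet)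
      ((fun u : Fin m => s(Fin.last m, u.castSucc)) '' S) := by
    simp only [Set.disjoint_left, Set.mem_image, not_exists, not_and]
    rintro _ ⟨e, -, rfl⟩ u - he
    induction e with
    | _ a b => simp [eq_comm (a := Fin.last m), Fin.castSucc_ne_last] at he
  have hstar : Function.Injective fun u : Fin m => s(Fin.last m, u.castSucc) := fun u v huv => by
    simpa using huv
  rw [edgeSet_extendLast, Set.ncard_union_eq hdisj,
    Set.ncard_image_of_injective _ (Sym2.map.injective (Fin.castSucc_injective m)),
    Set.ncard_image_of_injective _ hstar, Set.ncard_coe_finset]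

def castSuccHom (h : SimpleGraph (Fin m)) (S : Finset (Fin m)) : h →g h.extendLast S where
  toFun := Fin.castSucc
  map_rel' := (extendLast_adj_castSucc_castSucc h S _ _).2

def extendLastComponent (h : SimpleGraph (Fin m)) (S : Finset (Fin m)) :
    Option h.ConnectedComponent → (h.extendLast S).ConnectedComponent :=
  Option.elim' ((h.extendLast S).connectedComponentMk (Fin.last m))
    (ConnectedComponent.map (castSuccHom h S))

lemma extendLastComponent_surjective (h : SimpleGraph (Fin m)) (S : Finset (Fin m)) :
    Function.Surjective (extendLastComponent h S) := by
  intro c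
  induction c using ConnectedComponent.ind with
  | _ a =>
    induction a using Fin.lastCases with
    | last => exact ⟨none, rfl⟩
    | cast u => exact ⟨some (h.connectedComponentMk u), rfl⟩

lemma extendLastComponent_empty_injective (h : SimpleGraph (Fin m)) :
    Function.Injective (extendLastComponent h ∅) := by
  let f : Fin (m + 1) → Option h.ConnectedComponent :=
    Fin.lastCases none fun u => some (h.connectedComponentMk u)
  have hf : ∀ a b, (h.extendLast ∅).Adj a b → f a = f b := by
    intro a b hab
    induction a using Fin.lastCases <;> induction b using Fin.lastCases <;>
      simp_all [f, Adj.reachable]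
  refine Function.LeftInverse.injective (g := ConnectedComponent.lift f
    fun v w p _ => p.reachable.apply_eq_of_forall_adj hf) ?_
  rintro (_ | c)
  · simp [extendLastComponent, f]
  · induction c using ConnectedComponent.ind
    simp [extendLastComponent, castSuccHom, f]

lemma numComp_extendLast_le (h : SimpleGraph (Fin m)) (S : Finset (Fin m)) :
    numComp (h.extendLast S) ≤ numComp h + 1 := by
  rw [numComp, numComp, ← Finite.card_option]
  exact Nat.card_le_card_of_surjective _ (extendLastComponent_surjective h S)

lemma numComp_extendLast_empty (h : SimpleGraph (Fin m)) :
    numComp (h.extendLast ∅) = numComp h + 1 := by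
  rw [numComp, numComp, ← Finite.card_option]
  exact (Nat.card_eq_of_bijective _ ⟨extendLastComponent_empty_injective h,
    extendLastComponent_surjective h ∅⟩).symm

end SimpleGraph

section GnpRecursion

variable {m : ℕ} {p : ℝ}

def neighborProb (p : ℝ) (S : Finset (Fin m)) : ℝ := p ^ #S * (1 - p) ^ (m - #S)

lemma graphProb_nonneg (hp0 : 0 ≤ p) (hp1 : p ≤ 1) {n : ℕ} (g : SimpleGraph (Fin n)) :
    0 ≤ graphProb p g :=
  mul_nonneg (pow_nonneg hp0 _) (pow_nonneg (sub_nonneg.2 hp1) _)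

lemma neighborProb_nonneg (hp0 : 0 ≤ p) (hp1 : p ≤ 1) (S : Finset (Fin m)) :
    0 ≤ neighborProb p S :=
  mul_nonneg (pow_nonneg hp0 _) (pow_nonneg (sub_nonneg.2 hp1) _)

lemma neighborProb_empty : neighborProb p (∅ : Finset (Fin m)) = (1 - p) ^ m := by
  simp [neighborProb]

lemma sum_neighborProb : ∑ S : Finset (Fin m), neighborProb p S = 1 := by
  simp [neighborProb, Fin.sum_pow_mul_eq_add_pow]

lemma graphProb_extendLast (h : SimpleGraph (Fin m)) (S : Finset (Fin m)) :
    graphProb p (h.extendLast S) = graphProb p h * neighborProb p S := by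
  have hE := h.ncard_edgeSet_le_card_choose_two
  have hS : #S ≤ m := by simpa using S.card_le_univ
  have hchoose : (m + 1).choose 2 = m.choose 2 + m := by
    rw [Nat.choose_succ_succ', Nat.choose_one_right, add_comm]
  rw [Fintype.card_fin] at hE
  rw [graphProb, graphProb, neighborProb, SimpleGraph.ncard_edgeSet_extendLast, hchoose,
    show m.choose 2 + m - (h.edgeSet.ncard + #S) = (m.choose 2 - h.edgeSet.ncard) + (m - #S) by
      omega]
  ring

lemma Efall_succ (s : ℕ) : Efall (m + 1) p s = ∑ h : SimpleGraph (Fin m), ∑ S : Finset (Fin m),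
    ((numComp (h.extendLast S) - 1).descFactorial s : ℝ) * (graphProb p h * neighborProb p S) := by
  rw [Efall, ← (SimpleGraph.splitLast m).symm.sum_comp, Fintype.sum_prod_type]
  simp only [SimpleGraph.splitLast, Equiv.coe_fn_symm_mk, graphProb_extendLast]

lemma pow_mul_le_sum_extendLast (hp0 : 0 ≤ p) (hp1 : p ≤ 1) (h : SimpleGraph (Fin m)) (s : ℕ) :
    (1 - p) ^ m * ((numComp h).descFactorial s * graphProb p h) ≤
      ∑ S : Finset (Fin m), ((numComp (h.extendLast S) - 1).descFactorial s : ℝ) *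
        (graphProb p h * neighborProb p S) := by
  refine le_of_eq_of_le ?_ (single_le_sum (fun S _ => ?_) (mem_univ ∅))
  · rw [SimpleGraph.numComp_extendLast_empty, Nat.add_sub_cancel, neighborProb_empty]
    ring
  · exact mul_nonneg (Nat.cast_nonneg _)
      (mul_nonneg (graphProb_nonneg hp0 hp1 h) (neighborProb_nonneg hp0 hp1 S))

lemma sum_extendLast_le (hp0 : 0 ≤ p) (hp1 : p ≤ 1) (h : SimpleGraph (Fin m)) (s : ℕ) :
    ∑ S : Finset (Fin m), ((numComp (h.extendLast S) - 1).descFactorial s : ℝ) *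
      (graphProb p h * neighborProb p S) ≤ (numComp h).descFactorial s * graphProb p h :=
  calc _ ≤ ∑ S : Finset (Fin m),
        ((numComp h).descFactorial s : ℝ) * (graphProb p h * neighborProb p S) := by
        refine sum_le_sum fun S _ => mul_le_mul_of_nonneg_right ?_
          (mul_nonneg (graphProb_nonneg hp0 hp1 h) (neighborProb_nonneg hp0 hp1 S))
        exact_mod_cast Nat.descFactorial_le s
          (Nat.sub_le_of_le_add (SimpleGraph.numComp_extendLast_le h S))
    _ = (numComp h).descFactorial s * graphProb p h := by
        rw [← mul_sum, ← mul_sum, sum_neighborProb, mul_one]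

end GnpRecursion

theorem fallingMoment_sandwich (p : ℝ) (hp0 : 0 ≤ p) (hp1 : p ≤ 1) (n s : ℕ) (hn : 1 ≤ n) :
    (1 - p) ^ (n - 1) * EfallNu (n - 1) p s ≤ Efall n p s ∧
      Efall n p s ≤ EfallNu (n - 1) p s := by
  obtain ⟨m, rfl⟩ := Nat.exists_eq_add_of_le' hn
  rw [Nat.add_sub_cancel, Efall_succ, EfallNu, mul_sum]
  exact ⟨sum_le_sum fun h _ => pow_mul_le_sum_extendLast hp0 hp1 h s,
    sum_le_sum fun h _ => sum_extendLast_le hp0 hp1 h s⟩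
end
end
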